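/- Let B = √(2010061/425309). The set of (p,q,r,s) ∈ ℝ⁴ satisfying −p/2 + 5q − 4p² − 3q² = −r/2 + 5s − 4r² − 3s², −p/5 − 10q − 10p² + q² = −r/5 − 10s − 10r² + s², p² + q² = 1, r² + s² = 1 and (p,q) ≠ (r,s) is exactly the two-element set consisting of ( −20B/53 − 3/65, 30/53 − 2B/65, 20B/53 − 3/65, 2B/65 + 30/53 ) and its swap ( 20B/53 − 3/65, 2B/65 + 30/53, −20B/53 − 3/65, 30/53 − 2B/65 ). -/
import Mathlib


/-- The closing-equation system for `X = (5 - 6y, 1/2 + 8x)`, `Y = (-10 + 2y, 1/5 + 20x)`. -/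
def closingSys17 (p q r s : ℝ) : Prop :=
  -p / 2 + 5 * q - 4 * p ^ 2 - 3 * q ^ 2 = -r / 2 + 5 * s - 4 * r ^ 2 - 3 * s ^ 2 ∧
    -p / 5 - 10 * q - 10 * p ^ 2 + q ^ 2 = -r / 5 - 10 * s - 10 * r ^ 2 + s ^ 2 ∧
    p ^ 2 + q ^ 2 = 1 ∧ r ^ 2 + s ^ 2 = 1 ∧ (p, q) ≠ (r, s)

/-- With `B = √(2010061/425309)`, the solution set of the closing equations is exactly the
listed solution and its swap. -/
theorem closingSys17_solutions (B : ℝ) (hB : B = Real.sqrt (2010061 / 425309)) :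
    {x : ℝ × ℝ × ℝ × ℝ | closingSys17 x.1 x.2.1 x.2.2.1 x.2.2.2} =
      {(-20 * B / 53 - 3 / 65, 30 / 53 - 2 * B / 65,
          20 * B / 53 - 3 / 65, 2 * B / 65 + 30 / 53),
       (20 * B / 53 - 3 / 65, 2 * B / 65 + 30 / 53,
          -20 * B / 53 - 3 / 65, 30 / 53 - 2 * B / 65)} := by
  have hB2 : B ^ 2 = 2010061 / 425309 := by
    rw [hB, Real.sq_sqrt] ; norm_num
  have hBpos : 0 < B := by
    rw [hB]; exact Real.sqrt_pos.mpr (by norm_num)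
  ext ⟨p, q, r, s⟩
  simp only [Set.mem_setOf_eq, Set.mem_insert_iff, Set.mem_singleton_iff, closingSys17,
    Prod.mk.injEq]
  constructor
  · rintro ⟨h1, h2, hc1, hc2, hne⟩
    have key1 : 650 * q - 650 * s = 53 * p - 53 * r := by
      linear_combination 110 * h1 - 10 * h2 + 340 * hc1 - 340 * hc2
    have hpr : p ≠ r := by
      intro h
      exact hne (by rw [h, show q = s by linarith [key1, h ▸ key1]; ])
    have hpr' : p - r ≠ 0 := sub_ne_zero.mpr hpr
    have ha : (p - r) * (p + r + 6 / 65) = 0 := by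
      linear_combination (-1 : ℝ) * h1 - 3 * hc1 + 3 * hc2 + (1 / 130) * key1
    have ha' : p + r = -6 / 65 := by
      rcases mul_eq_zero.mp ha with h | h
      · exact absurd h hpr'
      · linarith
    have hb : (p - r) * (q + s - 60 / 53) = 0 := by
      linear_combination (650 / 53 : ℝ) * hc1 - (650 / 53 : ℝ) * hc2 -
        (650 / 53 : ℝ) * (p - r) * ha' - ((q + s) / 53) * key1
    have hb' : q + s = 60 / 53 := by
      rcases mul_eq_zero.mp hb with h | h
      · exact absurd h hpr'
      · linarith
    have hq' : q = 53 / 650 * p + 159 / 42250 + 30 / 53 := by linarith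
    have hp2 : (p - (20 * B / 53 - 3 / 65)) * (p - (-20 * B / 53 - 3 / 65)) = 0 := by
      linear_combination (422500 / 425309 : ℝ) * hc1 -
        (422500 / 425309 : ℝ) * (q + 53 / 650 * p + 159 / 42250 + 30 / 53) * hq' -
        (400 / 2809 : ℝ) * hB2
    rcases mul_eq_zero.mp hp2 with h | h
    · have hp : p = 20 * B / 53 - 3 / 65 := by linarith [sub_eq_zero.mp h]
      right
      refine ⟨hp, by linarith, by linarith, by linarith⟩
    · have hp : p = -20 * B / 53 - 3 / 65 := by linarith [sub_eq_zero.mp h]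
      left
      refine ⟨hp, by linarith, by linarith, by linarith⟩
  · rintro (⟨hp, hq, hr, hs⟩ | ⟨hp, hq, hr, hs⟩) <;> subst hp hq hr hs <;>
      refine ⟨by ring, by ring, ?_, ?_, ?_⟩
    · linear_combination (1701236 / 11868025 : ℝ) * hB2
    · linear_combination (1701236 / 11868025 : ℝ) * hB2
    · intro h
      have h1 := congrArg Prod.fst h
      simp only at h1
      nlinarith [hBpos]
    · linear_combination (1701236 / 11868025 : ℝ) * hB2
    · linear_combination (1701236 / 11868025 : ℝ) * hB2
    · intro h
      have h1 := congrArg Prod.fst h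
      simp only at h1
      nlinarith [hBpos]
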